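/- Let F be a finite set; for each p ∈ F let μ_p ∈ Λ, let Ψ_p be a finite list of elements of Λ, and let Φ_p be a finite list of nonzero elements of Λ spanning V. Let Y and Y' both be polarizing for every Φ_p, let 𝔞 be an alcove for the data (μ_p, Φ_p)_{p∈F}, and for each p let q_p (resp. q'_p) be a quasi-polynomial function on Λ coinciding with Θ[Φ_p↑Y] (resp. with Θ[Φ_p↑Y']) on T(𝔞 − μ_p) ∩ Λ. Assume that for every integer k ≥ 0 and every λ ∈ Λ, Σ_{p∈F} Σ_{η∈Ψ_p} Θ[Φ_p↑Y](λ − η − kμ_p) = Σ_{p∈F} Σ_{η∈Ψ_p} Θ[Φ_p↑Y'](λ − η − kμ_p). Then for every λ ∈ Λ, Σ_{p∈F} Σ_{η∈Ψ_p} q_p(λ − η) = Σ_{p∈F} Σ_{η∈Ψ_p} q'_p(λ − η); that is, the quasi-polynomial character Δ built from these data does not depend on the choice of the polarizing vector. -/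

import Mathlib

noncomputable section

open Module

variable {V : Type*} [NormedAddCommGroup V] [InnerProductSpace ℝ V] [FiniteDimensional ℝ V]

/-- A full-rank lattice: a free `ℤ`-submodule of rank `dim V` that spans `V` over `ℝ`. -/
def IsLattice (Λ : Submodule ℤ V) : Prop :=
  Submodule.span ℝ (Λ : Set V) = ⊤ ∧ Nonempty (Basis (Fin (finrank ℝ V)) ℤ Λ)

/-- Filter a list by a (classical) predicate. -/
def filterP (Φ : List V) (P : V → Prop) : List V :=
  Φ.filter fun v => @decide (P v) (Classical.propDecidable _)

/-- A vector `Y` is polarizing for the list `Φ` if `(φ, Y) ≠ 0` for every entry `φ`. -/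
def Polarizing (Φ : List V) (Y : V) : Prop := ∀ φ ∈ Φ, (inner ℝ φ Y : ℝ) ≠ 0

/-- The partition function `Θ[Φ↑Y] : V → ℤ`. -/
def theta (Φ : List V) (Y : V) (lam : V) : ℤ :=
  (-1 : ℤ) ^ (filterP Φ (fun φ => (inner ℝ φ Y : ℝ) < 0)).length *
    (Set.ncard {n : Fin Φ.length → ℕ |
      ∑ i : Fin Φ.length,
        (if (0 : ℝ) < (inner ℝ (Φ.get i) Y : ℝ) then ((n i : ℤ) • Φ.get i)
         else (-(((n i : ℤ) + 1) • Φ.get i))) = lam} : ℤ)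

/-- Polynomial functions on a real vector space, with values in `ℂ`:
the subalgebra of functions generated by (complexified) real linear functionals. -/
def IsPolyFun {W : Type*} [AddCommGroup W] [Module ℝ W] (p : W → ℂ) : Prop :=
  p ∈ Algebra.adjoin ℂ {g : W → ℂ | ∃ l : W →ₗ[ℝ] ℝ, g = fun w => ((l w : ℝ) : ℂ)}

/-- A function is quasi-polynomial on the lattice `Ξ` if there is a finite-index
sublattice `Ξ₀` such that on every coset `ξ + Ξ₀` of a lattice point `ξ ∈ Ξ`, the function
agrees with a polynomial function. -/
def IsQuasiPoly {W : Type*} [AddCommGroup W] [Module ℝ W] (Ξ : Submodule ℤ W) (f : W → ℂ) :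
    Prop :=
  ∃ Ξ₀ : Submodule ℤ W, Ξ₀ ≤ Ξ ∧ (∃ N : ℕ, 0 < N ∧ ∀ v ∈ Ξ, (N : ℤ) • v ∈ Ξ₀) ∧
    ∀ ξ ∈ Ξ, ∃ p : W → ℂ, IsPolyFun p ∧ ∀ μ ∈ Ξ₀, f (ξ + μ) = p (ξ + μ)

/-- `γ` is `Φ`-regular: it lies in the span of `Φ` and is not a linear combination of fewer
than `dim span Φ` elements of `Φ`. -/
def PhiRegular (Φ : List V) (γ : V) : Prop :=
  γ ∈ Submodule.span ℝ {v | v ∈ Φ} ∧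
    ¬∃ s : Finset V, ↑s ⊆ {v | v ∈ Φ} ∧
      s.card < finrank ℝ (Submodule.span ℝ {v | v ∈ Φ}) ∧ γ ∈ Submodule.span ℝ (s : Set V)

/-- A `Φ`-tope: a connected component of the set of `Φ`-regular elements. -/
def IsTope (Φ : List V) (T : Set V) : Prop :=
  ∃ γ, PhiRegular Φ γ ∧ T = connectedComponentIn {x | PhiRegular Φ x} γ

/-- An alcove for the data `(μ_p, Φ_p)`: a connected component of the set of `γ` such that
`γ - μ p` is `Φ p`-regular for all `p`. -/
def IsAlcove {F : Type*} (μ : F → V) (Φ : F → List V) (A : Set V) : Prop :=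
  ∃ γ, (∀ p, PhiRegular (Φ p) (γ - μ p)) ∧
    A = connectedComponentIn {x | ∀ p, PhiRegular (Φ p) (x - μ p)} γ


/-! Fix `λ ∈ Λ` and choose `N` so that every `q p` and `q' p` is polynomial on each coset of
`N • Λ`. The topes are open cones and a point `a` of the alcove has `a - μ p ∈ T p`, so
approximating the ray through `a` by lattice points gives `w ∈ Λ` and `j ∈ ℕ` with
`w - j • μ p ∈ T p` for all `p`. Along the rays `n ↦ λ - η + n • N • (w - j • μ p)` the difference
of the two sums is a polynomial in `n`. For large `n` all these points lie in the topes, where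
`q p` and `q' p` are the partition functions, so the hypothesis with `k = n * N * j` makes the
polynomial vanish at all large `n`. Hence it vanishes identically, and its value at `n = 0` is the
claim. -/

open Filter Topology

def polynomialSequences : Subalgebra ℂ (ℕ → ℂ) :=
  (Polynomial.aeval fun n : ℕ => (n : ℂ)).range

lemma eq_zero_of_mem_polynomialSequences {g : ℕ → ℂ} (hg : g ∈ polynomialSequences)
    (h : ∀ᶠ n in atTop, g n = 0) : g = 0 := by
  obtain ⟨P, rfl⟩ := hg
  obtain ⟨n₀, hn₀⟩ := eventually_atTop.1 h
  have hP : P = 0 := P.eq_zero_of_infinite_isRoot <|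
    ((Set.Ici_infinite n₀).image Nat.cast_injective.injOn).mono <| by
      rintro _ ⟨n, hn, rfl⟩
      simpa using hn₀ n hn
  simp [hP]

lemma IsPolyFun.mem_polynomialSequences {W : Type*} [AddCommGroup W] [Module ℝ W] {P : W → ℂ}
    (hP : IsPolyFun P) (ξ y : W) : (fun n : ℕ => P (ξ + n • y)) ∈ polynomialSequences := by
  induction hP using Algebra.adjoin_induction with
  | mem g hg =>
    obtain ⟨l, rfl⟩ := hg
    refine ⟨.C ((l ξ : ℝ) : ℂ) + .X * .C ((l y : ℝ) : ℂ), funext fun n => ?_⟩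
    simp [mul_comm (n : ℂ)]
  | algebraMap r => exact Subalgebra.algebraMap_mem _ r
  | add P Q _ _ hP hQ => exact Subalgebra.add_mem _ hP hQ
  | mul P Q _ _ hP hQ => exact Subalgebra.mul_mem _ hP hQ

section QuasiPoly

variable {W : Type*} [AddCommGroup W] [Module ℝ W]

def IsPolyOnCosets (Λ : Submodule ℤ W) (N : ℕ) (f : W → ℂ) : Prop :=
  ∀ ξ ∈ Λ, ∃ P : W → ℂ, IsPolyFun P ∧ ∀ v ∈ Λ, f (ξ + N • v) = P (ξ + N • v)

variable {Λ : Submodule ℤ W}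

lemma IsQuasiPoly.exists_isPolyOnCosets {f : W → ℂ} (hf : IsQuasiPoly Λ f) :
    ∃ N, 0 < N ∧ IsPolyOnCosets Λ N f := by
  obtain ⟨Ξ₀, -, ⟨N, hN, hNΞ₀⟩, hpoly⟩ := hf
  refine ⟨N, hN, fun ξ hξ => ?_⟩
  obtain ⟨P, hP, hfP⟩ := hpoly ξ hξ
  exact ⟨P, hP, fun v hv => by simpa only [natCast_zsmul] using hfP _ (hNΞ₀ v hv)⟩

lemma IsPolyOnCosets.of_dvd {N M : ℕ} {f : W → ℂ} (hf : IsPolyOnCosets Λ N f) (hNM : N ∣ M) :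
    IsPolyOnCosets Λ M f := by
  obtain ⟨k, rfl⟩ := hNM
  intro ξ hξ
  obtain ⟨P, hP, hfP⟩ := hf ξ hξ
  exact ⟨P, hP, fun v hv => by simpa only [mul_nsmul'] using hfP _ (nsmul_mem hv k)⟩

lemma exists_isPolyOnCosets_of_forall_isQuasiPoly {ι : Type*} [Finite ι] {f : ι → W → ℂ}
    (hf : ∀ i, IsQuasiPoly Λ (f i)) : ∃ N, 0 < N ∧ ∀ i, IsPolyOnCosets Λ N (f i) := by
  cases nonempty_fintype ι
  choose N hN hfN using fun i => (hf i).exists_isPolyOnCosets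
  exact ⟨∏ i, N i, Finset.prod_pos fun i _ => hN i,
    fun i => (hfN i).of_dvd (Finset.dvd_prod_of_mem N (Finset.mem_univ i))⟩

lemma IsPolyOnCosets.mem_polynomialSequences {N : ℕ} {f : W → ℂ} (hf : IsPolyOnCosets Λ N f)
    {ξ x : W} (hξ : ξ ∈ Λ) (hx : x ∈ Λ) :
    (fun n : ℕ => f (ξ + n • N • x)) ∈ polynomialSequences := by
  obtain ⟨P, hP, hfP⟩ := hf ξ hξ
  convert hP.mem_polynomialSequences ξ (N • x) using 2 with n
  rw [smul_comm, hfP _ (nsmul_mem hx n), smul_comm]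

lemma IsPolyOnCosets.sum_mem_polynomialSequences {F : Type*} [Fintype F] {N : ℕ}
    {f : F → W → ℂ} (hf : ∀ p, IsPolyOnCosets Λ N (f p))
    {Ψ : F → List W} (hΨ : ∀ p, ∀ η ∈ Ψ p, η ∈ Λ) {lam : W} (hlam : lam ∈ Λ) {x : F → W}
    (hx : ∀ p, x p ∈ Λ) :
    (fun n : ℕ => ∑ p, ((Ψ p).map fun η => f p (lam - η + n • N • x p)).sum) ∈
      polynomialSequences := by
  have hfun : (fun n : ℕ => ∑ p, ((Ψ p).map fun η => f p (lam - η + n • N • x p)).sum) =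
      ∑ p, ((Ψ p).map fun η (n : ℕ) => f p (lam - η + n • N • x p)).sum := by
    ext n
    simp [Pi.list_sum_apply, Function.comp_def]
  rw [hfun]
  refine Subalgebra.sum_mem _ fun p _ => Subalgebra.list_sum_mem _ ?_
  intro g hg
  obtain ⟨η, hη, rfl⟩ := List.mem_map.1 hg
  exact (hf p).mem_polynomialSequences (sub_mem hlam (hΨ p η hη)) (hx p)

lemma IsPolyOnCosets.sum_eq_of_eventually_eq {F : Type*} [Fintype F] {N : ℕ}
    {f f' : F → W → ℂ}
    (hf : ∀ p, IsPolyOnCosets Λ N (f p)) (hf' : ∀ p, IsPolyOnCosets Λ N (f' p))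
    {Ψ : F → List W} (hΨ : ∀ p, ∀ η ∈ Ψ p, η ∈ Λ) {lam : W} (hlam : lam ∈ Λ) {x : F → W}
    (hx : ∀ p, x p ∈ Λ)
    (h : ∀ᶠ n : ℕ in atTop, ∑ p, ((Ψ p).map fun η => f p (lam - η + n • N • x p)).sum =
      ∑ p, ((Ψ p).map fun η => f' p (lam - η + n • N • x p)).sum) :
    ∑ p, ((Ψ p).map fun η => f p (lam - η)).sum = ∑ p, ((Ψ p).map fun η => f' p (lam - η)).sum := by
  have hdiff := eq_zero_of_mem_polynomialSequences
    (sub_mem (sum_mem_polynomialSequences hf hΨ hlam hx)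
      (sum_mem_polynomialSequences hf' hΨ hlam hx))
    (h.mono fun n hn => sub_eq_zero.2 hn)
  simpa [sub_eq_zero] using congrFun hdiff 0

end QuasiPoly

lemma eventually_add_nsmul_mem {E : Type*} [AddCommGroup E] [Module ℝ E] [TopologicalSpace E]
    [IsTopologicalAddGroup E] [ContinuousSMul ℝ E] {T : Set E} (hT : IsOpen T)
    (hcone : ∀ x ∈ T, ∀ t : ℝ, 0 < t → t • x ∈ T) {x : E} (hx : x ∈ T) (y : E) :
    ∀ᶠ n : ℕ in atTop, y + n • x ∈ T := by
  have hlim : Tendsto (fun n : ℕ => (n : ℝ)⁻¹ • y + x) atTop (𝓝 x) := by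
    have hinv := (tendsto_inv_atTop_zero (𝕜 := ℝ)).comp tendsto_natCast_atTop_atTop
    simpa using (hinv.smul_const y).add_const x
  filter_upwards [hlim.eventually (hT.mem_nhds hx), eventually_gt_atTop 0] with n hn hn0
  have := hcone _ hn n (by positivity)
  rwa [smul_add, smul_inv_smul₀ (by positivity), Nat.cast_smul_eq_nsmul] at this

section Geometry

variable {E : Type*} [NormedAddCommGroup E] [InnerProductSpace ℝ E]

lemma isOpen_setOf_phiRegular {Φ : List E} (hΦ : Submodule.span ℝ {v | v ∈ Φ} = ⊤) :
    IsOpen {x | PhiRegular Φ x} := by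
  classical
  set small := {s : Finset E | ↑s ⊆ {v | v ∈ Φ} ∧
    s.card < finrank ℝ (Submodule.span ℝ {v | v ∈ Φ})}
  have hsmall : small.Finite := Φ.toFinset.powerset.finite_toSet.subset fun s hs => by
    simpa [Finset.subset_iff] using hs.1
  have hreg : {x | PhiRegular Φ x} = ⋂ s ∈ small, (Submodule.span ℝ (s : Set E) : Set E)ᶜ := by
    ext x
    simp [small, PhiRegular, hΦ]
  rw [hreg]
  exact hsmall.isOpen_biInter fun s _ => (Submodule.closed_of_finiteDimensional _).isOpen_compl

lemma IsTope.isOpen {Φ : List E} {T : Set E} (hT : IsTope Φ T)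
    (hΦ : Submodule.span ℝ {v | v ∈ Φ} = ⊤) : IsOpen T := by
  obtain ⟨γ, -, rfl⟩ := hT
  exact (isOpen_setOf_phiRegular hΦ).connectedComponentIn

lemma PhiRegular.smul {Φ : List E} {x : E} (hx : PhiRegular Φ x) {t : ℝ} (ht : t ≠ 0) :
    PhiRegular Φ (t • x) := by
  simpa only [PhiRegular, Submodule.smul_mem_iff _ ht] using hx

lemma IsTope.smul_mem {Φ : List E} {T : Set E} (hT : IsTope Φ T) {x : E} (hx : x ∈ T) {t : ℝ}
    (ht : 0 < t) : t • x ∈ T := by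
  obtain ⟨γ, -, rfl⟩ := hT
  have hray : IsPreconnected ((· • x) '' Set.Ioi (0 : ℝ)) :=
    isPreconnected_Ioi.image _ (continuous_id.smul continuous_const).continuousOn
  have hray_regular : (· • x) '' Set.Ioi (0 : ℝ) ⊆ {y | PhiRegular Φ y} := by
    rintro _ ⟨s, hs, rfl⟩
    exact (connectedComponentIn_subset _ _ hx).smul hs.ne'
  rw [connectedComponentIn_eq hx]
  exact hray.subset_connectedComponentIn ⟨1, Set.mem_Ioi.2 one_pos, one_smul ℝ x⟩ hray_regular
    ⟨t, ht, rfl⟩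

lemma IsAlcove.nonempty {F : Type*} {μ : F → E} {Φ : F → List E} {A : Set E}
    (hA : IsAlcove μ Φ A) : A.Nonempty := by
  obtain ⟨γ, hγ, rfl⟩ := hA
  exact ⟨γ, mem_connectedComponentIn hγ⟩

section Lattice

variable {Λ : Submodule ℤ E}

lemma IsLattice.exists_basis_mem (hΛ : IsLattice Λ) :
    ∃ b : Basis (Fin (finrank ℝ E)) ℝ E, ∀ i, b i ∈ Λ := by
  obtain ⟨hspan, ⟨bℤ⟩⟩ := hΛ
  set f : Fin (finrank ℝ E) → E := fun i => bℤ i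
  have hΛf : (Λ : Set E) ⊆ Submodule.span ℝ (Set.range f) := by
    intro x hx
    have := Submodule.mem_map_of_mem (f := Λ.subtype) (bℤ.mem_span ⟨x, hx⟩)
    rw [Submodule.map_span, ← Set.range_comp] at this
    exact Submodule.span_le_restrictScalars ℤ ℝ _ this
  refine ⟨basisOfTopLeSpanOfCardEqFinrank f (hspan ▸ Submodule.span_le.2 hΛf) (by simp),
    fun i => ?_⟩
  simp [f]

lemma IsLattice.exists_inv_smul_mem (hΛ : IsLattice Λ) {U : Set E} (hU : IsOpen U) {a : E}
    (ha : a ∈ U) : ∃ w ∈ Λ, ∃ j : ℕ, 0 < j ∧ (j : ℝ)⁻¹ • w ∈ U := by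
  obtain ⟨b, hb⟩ := hΛ.exists_basis_mem
  obtain ⟨ε, hε, hball⟩ := Metric.isOpen_iff.1 hU a ha
  set R := ∑ i, ‖b i‖
  obtain ⟨j, hj⟩ := exists_nat_gt (R / ε)
  have hj0 : (0 : ℝ) < j :=
    (div_nonneg (Finset.sum_nonneg fun i _ => norm_nonneg (b i)) hε.le).trans_lt hj
  refine ⟨ZSpan.floor b ((j : ℝ) • a),
    Submodule.span_le.2 (Set.range_subset_iff.2 hb) (ZSpan.floor b _).2, j, by exact_mod_cast hj0,
    hball ?_⟩
  rw [Metric.mem_ball, dist_eq_norm]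
  calc ‖(j : ℝ)⁻¹ • (ZSpan.floor b ((j : ℝ) • a) : E) - a‖
      = (j : ℝ)⁻¹ * ‖ZSpan.fract b ((j : ℝ) • a)‖ := by
        rw [ZSpan.fract_apply, ← norm_neg, neg_sub, ← norm_smul_of_nonneg (by positivity),
          smul_sub, inv_smul_smul₀ hj0.ne']
    _ ≤ (j : ℝ)⁻¹ * R := by gcongr; exact ZSpan.norm_fract_le b _
    _ < ε := by rwa [inv_mul_lt_iff₀ hj0, ← div_lt_iff₀ hε]

lemma IsLattice.exists_sub_nsmul_mem {ι : Type*} [Finite ι] (hΛ : IsLattice Λ) {T : ι → Set E}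
    (hT : ∀ i, IsOpen (T i)) (hcone : ∀ i, ∀ x ∈ T i, ∀ t : ℝ, 0 < t → t • x ∈ T i)
    {μ : ι → E} {a : E} (ha : ∀ i, a - μ i ∈ T i) : ∃ w ∈ Λ, ∃ j : ℕ, ∀ i, w - j • μ i ∈ T i := by
  have hU : IsOpen {x | ∀ i, x - μ i ∈ T i} := by
    rw [Set.ofPred_forall]
    exact isOpen_iInter_of_finite fun i => (hT i).preimage (continuous_sub_right (μ i))
  obtain ⟨w, hw, j, hj, hwU⟩ := hΛ.exists_inv_smul_mem hU ha
  refine ⟨w, hw, j, fun i => ?_⟩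
  have := hcone i _ (hwU i) j (by positivity)
  rwa [smul_sub, smul_inv_smul₀ (by positivity), Nat.cast_smul_eq_nsmul] at this

lemma IsLattice.sum_map_eq_of_eq_on_cones {F : Type*} [Fintype F] (hΛ : IsLattice Λ)
    {μ : F → E} (hμ : ∀ p, μ p ∈ Λ) {Ψ : F → List E} (hΨ : ∀ p, ∀ η ∈ Ψ p, η ∈ Λ)
    {T : F → Set E} (hT : ∀ p, IsOpen (T p))
    (hcone : ∀ p, ∀ x ∈ T p, ∀ t : ℝ, 0 < t → t • x ∈ T p) {a : E} (ha : ∀ p, a - μ p ∈ T p)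
    {N : ℕ} (hN : 0 < N) {f f' : F → E → ℂ} (hf : ∀ p, IsPolyOnCosets Λ N (f p))
    (hf' : ∀ p, IsPolyOnCosets Λ N (f' p))
    (h : ∀ k : ℕ, ∀ lam ∈ Λ, (∀ p, ∀ η ∈ Ψ p, lam - η - k • μ p ∈ T p) →
      ∑ p, ((Ψ p).map fun η => f p (lam - η - k • μ p)).sum =
        ∑ p, ((Ψ p).map fun η => f' p (lam - η - k • μ p)).sum)
    {lam : E} (hlam : lam ∈ Λ) :
    ∑ p, ((Ψ p).map fun η => f p (lam - η)).sum = ∑ p, ((Ψ p).map fun η => f' p (lam - η)).sum := by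
  obtain ⟨w, hw, j, hwj⟩ := hΛ.exists_sub_nsmul_mem hT hcone ha
  set x : F → E := fun p => w - j • μ p
  have hxΛ : ∀ p, x p ∈ Λ := fun p => sub_mem hw (nsmul_mem (hμ p) j)
  refine IsPolyOnCosets.sum_eq_of_eventually_eq hf hf' hΨ hlam hxΛ ?_
  have hmemT : ∀ᶠ n : ℕ in atTop, ∀ p, ∀ η ∈ Ψ p, lam - η + n • N • x p ∈ T p := by
    refine eventually_all.2 fun p => (eventually_all_finite (Ψ p).finite_toSet).2 fun η _ => ?_
    refine eventually_add_nsmul_mem (hT p) (hcone p) ?_ _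
    simpa [Nat.cast_smul_eq_nsmul] using hcone p _ (hwj p) N (Nat.cast_pos.2 hN)
  filter_upwards [hmemT] with n hn
  have harg : ∀ p η, lam + (n * N) • w - η - (n * N * j) • μ p = lam - η + n • N • x p := by
    intro p η
    simp only [x, smul_sub, mul_nsmul']
    abel
  simpa only [harg] using
    h (n * N * j) (lam + (n * N) • w) (add_mem hlam (nsmul_mem hw _)) (by simpa only [harg])

end Lattice

end Geometry

theorem delta_independent_of_polarization_general
    {F : Type*} [Fintype F]
    (Λ : Submodule ℤ V) (hΛ : IsLattice Λ)
    (μ : F → V) (hμ : ∀ p, μ p ∈ Λ)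
    (Ψ : F → List V) (hΨ : ∀ p, ∀ η ∈ Ψ p, η ∈ Λ)
    (Φ : F → List V)
    (hspan : ∀ p, Submodule.span ℝ {v | v ∈ Φ p} = ⊤)
    (Y Y' : V)
    (A : Set V) (hA : IsAlcove μ Φ A)
    (T : F → Set V) (hT : ∀ p, IsTope (Φ p) (T p))
    (hTA : ∀ p, ∀ x ∈ A, x - μ p ∈ T p)
    (q q' : F → V → ℂ)
    (hq : ∀ p, IsQuasiPoly Λ (q p)) (hq' : ∀ p, IsQuasiPoly Λ (q' p))
    (hqT : ∀ p, ∀ lam ∈ (Λ : Set V) ∩ T p, q p lam = (theta (Φ p) Y lam : ℂ))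
    (hq'T : ∀ p, ∀ lam ∈ (Λ : Set V) ∩ T p, q' p lam = (theta (Φ p) Y' lam : ℂ))
    (htheta : ∀ k : ℤ, 0 ≤ k → ∀ lam ∈ Λ,
      (∑ p : F, ((Ψ p).map (fun η => theta (Φ p) Y (lam - η - k • μ p))).sum) =
        ∑ p : F, ((Ψ p).map (fun η => theta (Φ p) Y' (lam - η - k • μ p))).sum) :
    ∀ lam ∈ Λ,
      (∑ p : F, ((Ψ p).map (fun η => q p (lam - η))).sum) =
        ∑ p : F, ((Ψ p).map (fun η => q' p (lam - η))).sum := by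
  intro lam hlam
  obtain ⟨N, hN, hNq⟩ := exists_isPolyOnCosets_of_forall_isQuasiPoly (f := Sum.elim q q')
    (Sum.forall.2 ⟨hq, hq'⟩)
  obtain ⟨a, haA⟩ := hA.nonempty
  refine hΛ.sum_map_eq_of_eq_on_cones hμ hΨ (fun p => (hT p).isOpen (hspan p))
    (fun p _ hx _ ht => (hT p).smul_mem hx ht) (fun p => hTA p a haA) hN
    (fun p => hNq (.inl p)) (fun p => hNq (.inr p)) (fun k lam' hlam' hk => ?_) hlam
  have hmem : ∀ p, ∀ η ∈ Ψ p, lam' - η - k • μ p ∈ (Λ : Set V) ∩ T p := fun p η hη =>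
    ⟨sub_mem (sub_mem hlam' (hΨ p η hη)) (nsmul_mem (hμ p) k), hk p η hη⟩
  calc _ = ∑ p, ((Ψ p).map fun η => (theta (Φ p) Y (lam' - η - k • μ p) : ℂ)).sum :=
        Finset.sum_congr rfl fun p _ => congrArg List.sum <|
          List.map_congr_left fun η hη => hqT p _ (hmem p η hη)
    _ = ∑ p, ((Ψ p).map fun η => (theta (Φ p) Y' (lam' - η - k • μ p) : ℂ)).sum := by
        simpa only [natCast_zsmul, Int.cast_sum, Int.cast_list_sum, List.map_map,
          Function.comp_def] using
          congrArg (Int.cast : ℤ → ℂ) (htheta k (Nat.cast_nonneg k) lam' hlam')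
    _ = _ := Finset.sum_congr rfl fun p _ => congrArg List.sum <|
          List.map_congr_left fun η hη => (hq'T p _ (hmem p η hη)).symm

/-- Independence of the asymptotic character `Δ` of the choice of polarizing vector: if the two
polarized sums of partition functions agree for all `k ≥ 0`, then the corresponding sums of
quasi-polynomials agree on `Λ`. -/
theorem delta_independent_of_polarization
    {F : Type*} [Fintype F]
    (Λ : Submodule ℤ V) (hΛ : IsLattice Λ)
    (μ : F → V) (hμ : ∀ p, μ p ∈ Λ)
    (Ψ : F → List V) (hΨ : ∀ p, ∀ η ∈ Ψ p, η ∈ Λ)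
    (Φ : F → List V)
    (hΦ0 : ∀ p, ∀ φ ∈ Φ p, φ ≠ 0) (hΦΛ : ∀ p, ∀ φ ∈ Φ p, φ ∈ Λ)
    (hspan : ∀ p, Submodule.span ℝ {v | v ∈ Φ p} = ⊤)
    (Y Y' : V) (hY : ∀ p, Polarizing (Φ p) Y) (hY' : ∀ p, Polarizing (Φ p) Y')
    (A : Set V) (hA : IsAlcove μ Φ A)
    (T : F → Set V) (hT : ∀ p, IsTope (Φ p) (T p))
    (hTA : ∀ p, ∀ x ∈ A, x - μ p ∈ T p)
    (q q' : F → V → ℂ)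
    (hq : ∀ p, IsQuasiPoly Λ (q p)) (hq' : ∀ p, IsQuasiPoly Λ (q' p))
    (hqT : ∀ p, ∀ lam ∈ (Λ : Set V) ∩ T p, q p lam = (theta (Φ p) Y lam : ℂ))
    (hq'T : ∀ p, ∀ lam ∈ (Λ : Set V) ∩ T p, q' p lam = (theta (Φ p) Y' lam : ℂ))
    (htheta : ∀ k : ℤ, 0 ≤ k → ∀ lam ∈ Λ,
      (∑ p : F, ((Ψ p).map (fun η => theta (Φ p) Y (lam - η - k • μ p))).sum) =
        ∑ p : F, ((Ψ p).map (fun η => theta (Φ p) Y' (lam - η - k • μ p))).sum) :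
    ∀ lam ∈ Λ,
      (∑ p : F, ((Ψ p).map (fun η => q p (lam - η))).sum) =
        ∑ p : F, ((Ψ p).map (fun η => q' p (lam - η))).sum :=
  delta_independent_of_polarization_general Λ hΛ μ hμ Ψ hΨ Φ hspan Y Y' A hA T hT hTA q q' hq hq'
    hqT hq'T htheta

end
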